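/- If A is an n×n skew-symmetric matrix and X is an HL-clan of A, then A and Inv(X,A) have equal corresponding principal minors of all orders, i.e., det(A[Y]) = det(Inv(X,A)[Y]) for every subset Y of [n]. -/

import Mathlib

/-
Order the indices of a principal submatrix `A[Y]` so that those in `X` come first. Then
`A[Y] = [[B, u vᵀ], [-v uᵀ, F]]`: the corner blocks are principal submatrices of `A`, the
coupling is rank one because `A[X, Xᶜ]` has rank at most one, and skew-symmetry of `A` gives the
other off-diagonal block. `Inv(X, A)[Y]` is the same matrix with `B` replaced by `-B = Bᵀ`.
For any such block matrix,
  `det = det B * det F + (uᵀ adj(B) u) * (vᵀ adj(F) v)`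
(a Schur complement computation when `B` and `F` are invertible, extended to all `B`, `F` as a
polynomial identity), and both terms are unchanged when `B` is replaced by `Bᵀ`.
-/

open Matrix

def MInv {m : Type*} [DecidableEq m] (X : Finset m) (A : Matrix m m ℝ) : Matrix m m ℝ :=
  fun i j => if i ∈ X ∧ j ∈ X then -A i j else A i j

def oSub {m : Type*} (A : Matrix m m ℝ) (X Y : Finset m) : Matrix X Y ℝ :=
  A.submatrix (fun i => (i : m)) (fun j => (j : m))

def pSub {m : Type*} (A : Matrix m m ℝ) (X : Finset m) : Matrix X X ℝ :=
  A.submatrix (fun i => (i : m)) (fun j => (j : m))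

def IsHLClan {m : Type*} [Fintype m] [DecidableEq m] (A : Matrix m m ℝ) (X : Finset m) : Prop :=
  (oSub A X Xᶜ).rank ≤ 1 ∧ (oSub A Xᶜ X).rank ≤ 1

def HLCRE {m : Type*} [Fintype m] [DecidableEq m] (A B : Matrix m m ℝ) : Prop :=
  ∃ N : ℕ, ∃ f : ℕ → Matrix m m ℝ, f 0 = A ∧ f N = B ∧
    (∀ k ≤ N, (f k)ᵀ = -(f k)) ∧
    (∀ k < N, ∃ X : Finset m, IsHLClan (f k) X ∧ f (k + 1) = MInv X (f k))

section BlockDeterminant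

variable {R : Type*} [CommRing R] {k l : Type*} [Fintype k] [DecidableEq k] [Fintype l]
  [DecidableEq l]

theorem det_add_vecMulVec_of_isUnit {F : Matrix l l R} (hF : IsUnit F.det) (a b : l → R) :
    (F + vecMulVec a b).det = F.det * (1 + b ⬝ᵥ F⁻¹ *ᵥ a) := by
  have hfac : F + vecMulVec a b = F * (1 + vecMulVec (F⁻¹ *ᵥ a) b) := by
    rw [Matrix.mul_add, Matrix.mul_one, mul_vecMulVec, mulVec_mulVec, mul_nonsing_inv _ hF,
      one_mulVec]
  rw [hfac, det_mul, vecMulVec_eq Unit, det_one_add_replicateCol_mul_replicateRow]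

theorem det_fromBlocks_vecMulVec_of_isUnit {B : Matrix k k R} {F : Matrix l l R}
    (hB : IsUnit B.det) (hF : IsUnit F.det) (u : k → R) (v : l → R) :
    (fromBlocks B (vecMulVec u v) (-vecMulVec v u) F).det =
      B.det * F.det + (u ⬝ᵥ B.adjugate *ᵥ u) * (v ⬝ᵥ F.adjugate *ᵥ v) := by
  have := B.invertibleOfIsUnitDet hB
  have hschur : F - -vecMulVec v u * ⅟B * vecMulVec u v =
      F + vecMulVec v ((u ⬝ᵥ B⁻¹ *ᵥ u) • v) := by
    rw [invOf_eq_nonsing_inv, Matrix.neg_mul, Matrix.neg_mul, sub_neg_eq_add, vecMulVec_mul,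
      vecMulVec_mul_vecMulVec, dotProduct_mulVec]
  rw [det_fromBlocks₁₁, hschur, det_add_vecMulVec_of_isUnit hF, nonsing_inv_apply _ hB,
    nonsing_inv_apply _ hF]
  simp only [smul_mulVec, smul_dotProduct, dotProduct_smul, smul_eq_mul]
  linear_combination (u ⬝ᵥ B.adjugate *ᵥ u) * (v ⬝ᵥ F.adjugate *ᵥ v) *
    (F.det * ↑hF.unit⁻¹ * hB.mul_val_inv + hF.mul_val_inv)

section map

variable {S : Type*} [CommRing S] (f : R →+* S)

theorem RingHom.map_det_fromBlocks_vecMulVec (B : Matrix k k R) (F : Matrix l l R) (u : k → R)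
    (v : l → R) :
    f (fromBlocks B (vecMulVec u v) (-vecMulVec v u) F).det =
      (fromBlocks (B.map f) (vecMulVec (f ∘ u) (f ∘ v)) (-vecMulVec (f ∘ v) (f ∘ u))
        (F.map f)).det := by
  rw [RingHom.map_det]
  congr 1
  ext (i | i) (j | j) <;> simp [vecMulVec_apply]

theorem RingHom.map_dotProduct_adjugate_mulVec (B : Matrix k k R) (u : k → R) :
    f (u ⬝ᵥ B.adjugate *ᵥ u) = (f ∘ u) ⬝ᵥ (B.map f).adjugate *ᵥ (f ∘ u) := by
  rw [RingHom.map_dotProduct]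
  congr 1
  ext i
  rw [Function.comp_apply, RingHom.map_mulVec, ← RingHom.mapMatrix_apply, RingHom.map_adjugate]
  rfl

end map

open Polynomial

theorem isUnit_det_map_charmatrix {m : Type*} [Fintype m] [DecidableEq m] (M : Matrix m m R) :
    IsUnit ((charmatrix M).map (algebraMap R[X] (FractionRing R[X]))).det := by
  rw [← RingHom.mapMatrix_apply, ← RingHom.map_det]
  exact IsLocalization.map_units _ ⟨_, M.charpoly_monic.mem_nonZeroDivisors⟩

theorem map_eval_zero_charmatrix_neg {m : Type*} [Fintype m] [DecidableEq m] (M : Matrix m m R) :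
    (charmatrix (-M)).map (eval 0) = M := by
  ext i j
  by_cases h : i = j <;> simp [h]

theorem det_fromBlocks_vecMulVec (B : Matrix k k R) (F : Matrix l l R) (u : k → R) (v : l → R) :
    (fromBlocks B (vecMulVec u v) (-vecMulVec v u) F).det =
      B.det * F.det + (u ⬝ᵥ B.adjugate *ᵥ u) * (v ⬝ᵥ F.adjugate *ᵥ v) := by
  -- `charmatrix (-M)` specializes to `M` at `X = 0`, and its determinant is monic, hence a unit
  -- in the fraction ring of `R[X]`.
  have hpoly : (fromBlocks (charmatrix (-B)) (vecMulVec (C ∘ u) (C ∘ v))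
      (-vecMulVec (C ∘ v) (C ∘ u)) (charmatrix (-F))).det =
      (charmatrix (-B)).det * (charmatrix (-F)).det +
        ((C ∘ u) ⬝ᵥ (charmatrix (-B)).adjugate *ᵥ (C ∘ u)) *
          ((C ∘ v) ⬝ᵥ (charmatrix (-F)).adjugate *ᵥ (C ∘ v)) := by
    apply IsFractionRing.injective R[X] (FractionRing R[X])
    rw [RingHom.map_det_fromBlocks_vecMulVec, map_add, map_mul, map_mul, RingHom.map_det,
      RingHom.map_det, RingHom.map_dotProduct_adjugate_mulVec,
      RingHom.map_dotProduct_adjugate_mulVec]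
    exact det_fromBlocks_vecMulVec_of_isUnit (isUnit_det_map_charmatrix _)
      (isUnit_det_map_charmatrix _) _ _
  have := congrArg (evalRingHom 0) hpoly
  rw [RingHom.map_det_fromBlocks_vecMulVec, map_add, map_mul, map_mul, RingHom.map_det,
      RingHom.map_det, RingHom.map_dotProduct_adjugate_mulVec,
      RingHom.map_dotProduct_adjugate_mulVec] at this
  simpa [map_eval_zero_charmatrix_neg, Function.comp_def] using this

theorem det_fromBlocks_transpose_vecMulVec (B : Matrix k k R) (F : Matrix l l R) (u : k → R)
    (v : l → R) :
    (fromBlocks Bᵀ (vecMulVec u v) (-vecMulVec v u) F).det =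
      (fromBlocks B (vecMulVec u v) (-vecMulVec v u) F).det := by
  rw [det_fromBlocks_vecMulVec, det_fromBlocks_vecMulVec, det_transpose, ← adjugate_transpose,
    mulVec_transpose, dotProduct_comm, ← dotProduct_mulVec]

end BlockDeterminant

theorem exists_eq_vecMulVec_of_rank_le_one {K m n : Type*} [Field K] [Fintype n]
    {M : Matrix m n K} (h : M.rank ≤ 1) : ∃ (u : m → K) (v : n → K), M = vecMulVec u v := by
  rw [rank_eq_finrank_span_cols] at h
  have := FiniteDimensional.span_of_finite K (Set.finite_range M.col)
  obtain ⟨w, hw⟩ := finrank_le_one_iff.mp h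
  have hcol (j : n) : ∃ c : K, c • (w : m → K) = M.col j :=
    ⟨_, congrArg Subtype.val (hw ⟨_, Submodule.subset_span ⟨j, rfl⟩⟩).choose_spec⟩
  choose c hc using hcol
  refine ⟨w, c, ?_⟩
  ext i j
  simpa [vecMulVec_apply, mul_comm] using (congrFun (hc j) i).symm

theorem exists_mul_of_rank_oSub_le_one {m : Type*} [Fintype m] [DecidableEq m]
    {A : Matrix m m ℝ} {X Y : Finset m} (h : (oSub A X Y).rank ≤ 1) :
    ∃ u v : m → ℝ, ∀ i ∈ X, ∀ j ∈ Y, A i j = u i * v j := by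
  obtain ⟨u, v, huv⟩ := exists_eq_vecMulVec_of_rank_le_one h
  refine ⟨fun i => if hi : i ∈ X then u ⟨i, hi⟩ else 0,
    fun j => if hj : j ∈ Y then v ⟨j, hj⟩ else 0, fun i hi j hj => ?_⟩
  simpa [oSub, vecMulVec_apply, hi, hj] using congrFun (congrFun huv ⟨i, hi⟩) ⟨j, hj⟩

theorem det_MInv_of_transpose_eq_neg {m : Type*} [Fintype m] [DecidableEq m] {A : Matrix m m ℝ}
    (hA : Aᵀ = -A) {X : Finset m} {u v : m → ℝ}
    (huv : ∀ i ∈ X, ∀ j ∉ X, A i j = u i * v j) : (MInv X A).det = A.det := by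
  have hskew (i j : m) : A j i = -A i j := by simpa using congrFun (congrFun hA i) j
  let e := Equiv.sumCompl (· ∈ X)
  let u' : {i // i ∈ X} → ℝ := fun i => u i
  let v' : {j // j ∉ X} → ℝ := fun j => v j
  have hA' : A.submatrix e e = fromBlocks (A.toBlock (· ∈ X) (· ∈ X)) (vecMulVec u' v')
      (-vecMulVec v' u') (A.toBlock (· ∉ X) (· ∉ X)) := by
    ext (i | i) (j | j)
    · rfl
    · simp [e, u', v', vecMulVec_apply, huv _ i.2 _ j.2]
    · simp [e, u', v', vecMulVec_apply, hskew j.1 i.1, huv _ j.2 _ i.2, mul_comm]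
    · rfl
  have hMInv : (MInv X A).submatrix e e = fromBlocks (A.toBlock (· ∈ X) (· ∈ X))ᵀ
      (vecMulVec u' v') (-vecMulVec v' u') (A.toBlock (· ∉ X) (· ∉ X)) := by
    ext (i | i) (j | j)
    · simp [e, toBlock, MInv, hskew i.1 j.1, i.2, j.2]
    · simp [e, u', v', vecMulVec_apply, MInv, j.2, huv _ i.2 _ j.2]
    · simp [e, u', v', vecMulVec_apply, MInv, i.2, hskew j.1 i.1, huv _ j.2 _ i.2, mul_comm]
    · simp [e, toBlock, MInv, i.2]
  rw [← det_submatrix_equiv_self e, ← det_submatrix_equiv_self e A, hMInv, hA',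
    det_fromBlocks_transpose_vecMulVec]

theorem stmt_7 {n : ℕ} (A : Matrix (Fin n) (Fin n) ℝ) (hA : Aᵀ = -A)
    (X : Finset (Fin n)) (hX : IsHLClan A X) :
    ∀ Y : Finset (Fin n), (pSub A Y).det = (pSub (MInv X A) Y).det := by
  intro Y
  obtain ⟨u, v, huv⟩ := exists_mul_of_rank_oSub_le_one hX.1
  have hsub : pSub (MInv X A) Y = MInv (X.subtype (· ∈ Y)) (pSub A Y) := by
    ext i j
    simp [MInv, pSub]
  have hskew : (pSub A Y)ᵀ = -pSub A Y := by
    rw [pSub, transpose_submatrix, hA]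
    rfl
  rw [hsub, det_MInv_of_transpose_eq_neg hskew (u := u ∘ (↑)) (v := v ∘ (↑))]
  intro i hi j hj
  exact huv i (by simpa using hi) j (by simpa using hj)
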